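/- Let P⁺ and P⁻ be finite sets of propositional variables, let M0 and M1 be Kripke models, let w0 be a final world of M0 with cluster C0, and let x1 be a world of M1 with x1 R1 y for every world y of M1. If (M0,w0) →₂^{(P⁺,P⁻)} (M1,x1), then C0 matches every cluster of final worlds of M1. -/

import Mathlib

/-- Modal formulas over countably many variables. -/
inductive ModalForm : Type where
  | var : ℕ → ModalForm
  | bot : ModalForm
  | and : ModalForm → ModalForm → ModalForm
  | or : ModalForm → ModalForm → ModalForm
  | not : ModalForm → ModalForm
  | imp : ModalForm → ModalForm → ModalForm
  | box : ModalForm → ModalForm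

namespace ModalForm

mutual
  /-- positively occurring variables -/
  def vpos : ModalForm → Finset ℕ
    | var p => {p}
    | bot => ∅
    | and φ ψ => vpos φ ∪ vpos ψ
    | or φ ψ => vpos φ ∪ vpos ψ
    | not φ => vneg φ
    | imp φ ψ => vneg φ ∪ vpos ψ
    | box φ => vpos φ
  /-- negatively occurring variables -/
  def vneg : ModalForm → Finset ℕ
    | var _ => ∅
    | bot => ∅
    | and φ ψ => vneg φ ∪ vneg ψ
    | or φ ψ => vneg φ ∪ vneg ψ
    | not φ => vpos φ
    | imp φ ψ => vpos φ ∪ vneg ψ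
    | box φ => vneg φ
end

/-- Modal depth: maximal nesting of `□`. -/
def depth : ModalForm → ℕ
  | var _ => 0
  | bot => 0
  | and φ ψ => max (depth φ) (depth ψ)
  | or φ ψ => max (depth φ) (depth ψ)
  | not φ => depth φ
  | imp φ ψ => max (depth φ) (depth ψ)
  | box φ => depth φ + 1

/-- `◇φ := ¬□¬φ` -/
def dia (φ : ModalForm) : ModalForm := not (box (not φ))

/-- `⊤ := ¬⊥` -/
def top : ModalForm := not bot

end ModalForm

/-- An S4 Kripke frame: nonempty set of worlds with a reflexive transitive relation. -/
structure KFrame : Type 1 where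
  W : Type
  R : W → W → Prop
  nonempty : Nonempty W
  refl : ∀ x, R x x
  trans : ∀ x y z, R x y → R y z → R x z

/-- A Kripke model: a frame with a valuation. -/
structure KModel : Type 1 extends KFrame where
  val : W → ℕ → Prop

/-- The model based on frame `F` with valuation `V`. -/
def KFrame.toModel (F : KFrame) (V : F.W → ℕ → Prop) : KModel :=
  { toKFrame := F, val := V }

/-- Satisfaction in a Kripke model. -/
def KModel.Sat (M : KModel) : M.W → ModalForm → Prop
  | w, .var p => M.val w p
  | _, .bot => False
  | w, .and φ ψ => M.Sat w φ ∧ M.Sat w ψ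
  | w, .or φ ψ => M.Sat w φ ∨ M.Sat w ψ
  | w, .not φ => ¬ M.Sat w φ
  | w, .imp φ ψ => M.Sat w φ → M.Sat w ψ
  | w, .box φ => ∀ y, M.R w y → M.Sat y φ

/-- `(M0,w0) →ₙ^{(P⁺,P⁻)} (M1,w1)`: every `(P⁺,P⁻)`-formula of depth ≤ n
satisfied at `(M0,w0)` is satisfied at `(M1,w1)`. -/
def ModalArrow (Pp Pm : Finset ℕ) (n : ℕ) (M0 : KModel) (w0 : M0.W)
    (M1 : KModel) (w1 : M1.W) : Prop :=
  ∀ φ : ModalForm, φ.vpos ⊆ Pp → φ.vneg ⊆ Pm → φ.depth ≤ n →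
    M0.Sat w0 φ → M1.Sat w1 φ

/-- p-morphism between frames. -/
def PMorphism (F G : KFrame) (f : F.W → G.W) : Prop :=
  (∀ x y, F.R x y → G.R (f x) (f y)) ∧
  (∀ x w, G.R (f x) w → ∃ z, F.R x z ∧ f z = w)

/-- The class `C` of Kripke models enjoys `n`-IP. -/
def EnjoysIP (C : Set KModel) (n : ℕ) : Prop :=
  ∀ (Pp Pm : Finset ℕ) (M0 M1 : KModel), M0 ∈ C → M1 ∈ C →
    ∀ (w0 : M0.W) (w1 : M1.W), ModalArrow Pp Pm n M0 w0 M1 w1 →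
      ∃ (F : KFrame) (wstar : F.W) (f0 : F.W → M0.W) (f1 : F.W → M1.W),
        (∀ V : F.W → ℕ → Prop, F.toModel V ∈ C) ∧
        PMorphism F M0.toKFrame f0 ∧
        PMorphism F M1.toKFrame f1 ∧
        f0 wstar = w0 ∧ f1 wstar = w1 ∧
        ∀ x : F.W, ModalArrow Pp Pm 0 M0 (f0 x) M1 (f1 x)

/-- A world is final iff every successor is also a predecessor. -/
def KModel.Final (M : KModel) (w : M.W) : Prop := ∀ y, M.R w y → M.R y w

/-- The cluster of a world. -/
def KModel.cluster (M : KModel) (w : M.W) : Set M.W := {u | M.R w u ∧ M.R u w}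

/-- Cluster `C0` of `M0` matches cluster `C1` of `M1`. -/
def Matches (Pp Pm : Finset ℕ) (M0 M1 : KModel) (C0 : Set M0.W) (C1 : Set M1.W) : Prop :=
  (∀ u0 ∈ C0, ∃ u1 ∈ C1, ModalArrow Pp Pm 0 M0 u0 M1 u1) ∧
  (∀ u1 ∈ C1, ∃ u0 ∈ C0, ModalArrow Pp Pm 0 M0 u0 M1 u1)

/-- `φ` is satisfied at every world of every model in `C`. -/
def ValidOn (C : Set KModel) (φ : ModalForm) : Prop :=
  ∀ M ∈ C, ∀ w : M.W, M.Sat w φ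

/-! Over the finite signature `(P⁺, P⁻)` the depth-0 type of a world `u` is captured by a single
characteristic formula `χ u`, and only finitely many such formulas exist. For `u0` in the cluster
`C0` of the final world `w0`, the depth-2 formula `□◇χ u0` holds at `w0`, hence at `x1`, hence
`◇χ u0` holds at every final `u1`; its witness lies in the cluster of `u1`. Conversely the
depth-1 formula `□ ⋁_{u ∈ C0} χ u` holds at `w0`, hence at `x1`, hence at every world of `M1`. -/

namespace ModalForm

/-- `φ` is a `(P⁺,P⁻)`-formula of modal depth at most `n`. -/
def InFragment (Pp Pm : Finset ℕ) (n : ℕ) (φ : ModalForm) : Prop :=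
  φ.vpos ⊆ Pp ∧ φ.vneg ⊆ Pm ∧ φ.depth ≤ n

def conj (l : List ModalForm) : ModalForm := l.foldr and top

def disj (l : List ModalForm) : ModalForm := l.foldr or bot

section InFragment

variable {Pp Pm : Finset ℕ} {n : ℕ} {φ ψ : ModalForm}

@[simp]
theorem inFragment_var {p : ℕ} : InFragment Pp Pm n (var p) ↔ p ∈ Pp := by
  simp [InFragment, vpos, vneg, depth]

@[simp]
theorem inFragment_bot : InFragment Pp Pm n bot := by
  simp [InFragment, vpos, vneg, depth]

@[simp]
theorem inFragment_and :
    InFragment Pp Pm n (and φ ψ) ↔ InFragment Pp Pm n φ ∧ InFragment Pp Pm n ψ := by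
  simp only [InFragment, vpos, vneg, depth, Finset.union_subset_iff, max_le_iff]
  tauto

@[simp]
theorem inFragment_or :
    InFragment Pp Pm n (or φ ψ) ↔ InFragment Pp Pm n φ ∧ InFragment Pp Pm n ψ := by
  simp only [InFragment, vpos, vneg, depth, Finset.union_subset_iff, max_le_iff]
  tauto

@[simp]
theorem inFragment_not : InFragment Pp Pm n (not φ) ↔ InFragment Pm Pp n φ := by
  simp only [InFragment, vpos, vneg, depth]
  tauto

@[simp]
theorem inFragment_imp :
    InFragment Pp Pm n (imp φ ψ) ↔ InFragment Pm Pp n φ ∧ InFragment Pp Pm n ψ := by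
  simp only [InFragment, vpos, vneg, depth, Finset.union_subset_iff, max_le_iff]
  tauto

@[simp]
theorem inFragment_box_succ : InFragment Pp Pm (n + 1) (box φ) ↔ InFragment Pp Pm n φ := by
  simp [InFragment, vpos, vneg, depth]

@[simp]
theorem not_inFragment_box_zero : ¬ InFragment Pp Pm 0 (box φ) := by
  simp [InFragment, depth]

theorem InFragment.mono {m : ℕ} (h : InFragment Pp Pm n φ) (hnm : n ≤ m) :
    InFragment Pp Pm m φ :=
  ⟨h.1, h.2.1, h.2.2.trans hnm⟩

theorem InFragment.box (h : InFragment Pp Pm n φ) : InFragment Pp Pm (n + 1) (box φ) :=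
  inFragment_box_succ.2 h

theorem InFragment.dia (h : InFragment Pp Pm n φ) : InFragment Pp Pm (n + 1) φ.dia := by
  simpa [ModalForm.dia] using h

theorem InFragment.conj {l : List ModalForm} (h : ∀ φ ∈ l, InFragment Pp Pm n φ) :
    InFragment Pp Pm n (conj l) := by
  induction l with
  | nil => simp [ModalForm.conj, top]
  | cons φ l ih => simp_all [ModalForm.conj]

theorem InFragment.disj {l : List ModalForm} (h : ∀ φ ∈ l, InFragment Pp Pm n φ) :
    InFragment Pp Pm n (disj l) := by
  induction l with
  | nil => simp [ModalForm.disj]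
  | cons φ l ih => simp_all [ModalForm.disj]

end InFragment

end ModalForm

open ModalForm

namespace KModel

variable (M : KModel) {w u : M.W} {φ : ModalForm}

@[simp]
theorem sat_conj {l : List ModalForm} : M.Sat w (conj l) ↔ ∀ φ ∈ l, M.Sat w φ := by
  induction l with
  | nil => simp [conj, top, Sat]
  | cons φ l ih => simp [conj, Sat, ← ih]

@[simp]
theorem sat_disj {l : List ModalForm} : M.Sat w (disj l) ↔ ∃ φ ∈ l, M.Sat w φ := by
  induction l with
  | nil => simp [disj, Sat]
  | cons φ l ih => simp [disj, Sat, ← ih]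

theorem sat_dia : M.Sat w φ.dia ↔ ∃ y, M.R w y ∧ M.Sat y φ := by
  simp [ModalForm.dia, Sat]

variable {M}

theorem mem_cluster_of_final (hw : M.Final w) {y : M.W} (hy : M.R w y) : y ∈ M.cluster w :=
  ⟨hy, hw y hy⟩

theorem sat_box_of_final (hw : M.Final w) (h : ∀ y ∈ M.cluster w, M.Sat y φ) :
    M.Sat w φ.box :=
  fun _ hy => h _ (mem_cluster_of_final hw hy)

theorem sat_box_dia_of_final (hw : M.Final w) (hu : u ∈ M.cluster w) (hφ : M.Sat u φ) :
    M.Sat w φ.dia.box :=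
  sat_box_of_final hw fun _ hy => (M.sat_dia).2 ⟨u, M.trans _ _ _ hy.2 hu.1, hφ⟩

theorem exists_mem_cluster_of_sat_dia (hu : M.Final u) (h : M.Sat u φ.dia) :
    ∃ v ∈ M.cluster u, M.Sat v φ := by
  obtain ⟨v, huv, hv⟩ := (M.sat_dia).1 h
  exact ⟨v, mem_cluster_of_final hu huv, hv⟩

end KModel

theorem ModalArrow.sat {Pp Pm : Finset ℕ} {n : ℕ} {M0 M1 : KModel} {w0 : M0.W} {w1 : M1.W}
    (h : ModalArrow Pp Pm n M0 w0 M1 w1) {φ : ModalForm} (hφ : φ.InFragment Pp Pm n)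
    (hs : M0.Sat w0 φ) : M1.Sat w1 φ :=
  h φ hφ.1 hφ.2.1 hφ.2.2 hs

section DepthZero

variable {Pp Pm : Finset ℕ} {M0 M1 : KModel} {u : M0.W} {v : M1.W}

/-- Negation swaps the roles of the two models and of `P⁺` and `P⁻`, which is why everything is
generalized in the induction. -/
theorem sat_of_val_of_inFragment_zero (hp : ∀ p ∈ Pp, M0.val u p → M1.val v p)
    (hm : ∀ p ∈ Pm, M1.val v p → M0.val u p) {φ : ModalForm} (hφ : φ.InFragment Pp Pm 0)
    (hs : M0.Sat u φ) : M1.Sat v φ := by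
  induction φ generalizing Pp Pm M0 M1 with
  | var p => exact hp p (inFragment_var.1 hφ) hs
  | bot => exact hs
  | and φ ψ ihφ ihψ =>
    rw [inFragment_and] at hφ
    exact ⟨ihφ hp hm hφ.1 hs.1, ihψ hp hm hφ.2 hs.2⟩
  | or φ ψ ihφ ihψ =>
    rw [inFragment_or] at hφ
    exact hs.imp (ihφ hp hm hφ.1) (ihψ hp hm hφ.2)
  | not φ ih =>
    exact fun h1 => hs (ih hm hp (inFragment_not.1 hφ) h1)
  | imp φ ψ ihφ ihψ =>
    rw [inFragment_imp] at hφ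
    exact fun h1 => ihψ hp hm hφ.2 (hs (ihφ hm hp hφ.1 h1))
  | box φ _ => exact absurd hφ not_inFragment_box_zero

theorem modalArrow_zero_of_val (hp : ∀ p ∈ Pp, M0.val u p → M1.val v p)
    (hm : ∀ p ∈ Pm, M1.val v p → M0.val u p) : ModalArrow Pp Pm 0 M0 u M1 v :=
  fun _ h1 h2 h3 => sat_of_val_of_inFragment_zero hp hm ⟨h1, h2, h3⟩

end DepthZero

namespace ModalForm

noncomputable def literalConj (A B : Finset ℕ) : ModalForm :=
  conj (A.toList.map var ++ B.toList.map fun p => not (var p))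

open scoped Classical in
noncomputable def charForm (Pp Pm : Finset ℕ) (M : KModel) (u : M.W) : ModalForm :=
  literalConj (Pp.filter (M.val u)) (Pm.filter fun p => ¬ M.val u p)

variable {Pp Pm : Finset ℕ}

theorem inFragment_charForm (M : KModel) (u : M.W) : (charForm Pp Pm M u).InFragment Pp Pm 0 := by
  refine InFragment.conj fun φ hφ => ?_
  simp only [List.mem_append, List.mem_map, Finset.mem_toList, Finset.mem_filter] at hφ
  rcases hφ with ⟨p, ⟨hp, -⟩, rfl⟩ | ⟨p, ⟨hp, -⟩, rfl⟩ <;> simpa using hp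

theorem sat_charForm {M0 M1 : KModel} {u : M0.W} {v : M1.W} :
    M1.Sat v (charForm Pp Pm M0 u) ↔
      (∀ p ∈ Pp, M0.val u p → M1.val v p) ∧ (∀ p ∈ Pm, M1.val v p → M0.val u p) := by
  simp only [charForm, literalConj, KModel.sat_conj, List.mem_append, List.mem_map,
    Finset.mem_toList, Finset.mem_filter]
  constructor
  · intro h
    refine ⟨fun p hp hu => h _ (.inl ⟨p, ⟨hp, hu⟩, rfl⟩), fun p hp hv => by_contra fun hu => ?_⟩
    exact h _ (.inr ⟨p, ⟨hp, hu⟩, rfl⟩) hv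
  · rintro ⟨hp, hm⟩ _ (⟨p, ⟨hpP, hu⟩, rfl⟩ | ⟨p, ⟨hpP, hu⟩, rfl⟩)
    exacts [hp p hpP hu, fun hv => hu (hm p hpP hv)]

theorem sat_charForm_self (M : KModel) (u : M.W) : M.Sat u (charForm Pp Pm M u) :=
  sat_charForm.2 ⟨fun _ _ h => h, fun _ _ h => h⟩

theorem modalArrow_zero_of_sat_charForm {M0 M1 : KModel} {u : M0.W} {v : M1.W}
    (h : M1.Sat v (charForm Pp Pm M0 u)) : ModalArrow Pp Pm 0 M0 u M1 v :=
  modalArrow_zero_of_val (sat_charForm.1 h).1 (sat_charForm.1 h).2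

theorem finite_image_charForm (M : KModel) (s : Set M.W) : (charForm Pp Pm M '' s).Finite := by
  classical
  refine ((Pp.powerset ×ˢ Pm.powerset).finite_toSet.image
    fun AB => literalConj AB.1 AB.2).subset ?_
  rintro _ ⟨u, -, rfl⟩
  exact ⟨(Pp.filter (M.val u), Pm.filter fun p => ¬ M.val u p),
    Finset.mem_product.2 ⟨Finset.mem_powerset.2 (Finset.filter_subset _ _),
      Finset.mem_powerset.2 (Finset.filter_subset _ _)⟩, rfl⟩

noncomputable def charFormOfSet (Pp Pm : Finset ℕ) (M : KModel) (s : Set M.W) : ModalForm :=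
  disj (finite_image_charForm (Pp := Pp) (Pm := Pm) M s).toFinset.toList

theorem inFragment_charFormOfSet (M : KModel) (s : Set M.W) :
    (charFormOfSet Pp Pm M s).InFragment Pp Pm 0 := by
  refine InFragment.disj fun φ hφ => ?_
  simp only [Finset.mem_toList, Set.Finite.mem_toFinset] at hφ
  obtain ⟨u, -, rfl⟩ := hφ
  exact inFragment_charForm M u

theorem sat_charFormOfSet {M : KModel} {s : Set M.W} {u : M.W} (hu : u ∈ s) :
    M.Sat u (charFormOfSet Pp Pm M s) :=
  (M.sat_disj).2 ⟨_, by simpa using ⟨u, hu, rfl⟩, sat_charForm_self M u⟩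

theorem exists_modalArrow_zero_of_sat_charFormOfSet {M0 M1 : KModel} {s : Set M0.W} {v : M1.W}
    (h : M1.Sat v (charFormOfSet Pp Pm M0 s)) : ∃ u ∈ s, ModalArrow Pp Pm 0 M0 u M1 v := by
  obtain ⟨_, hφ, hv⟩ := (M1.sat_disj).1 h
  simp only [Finset.mem_toList, Set.Finite.mem_toFinset] at hφ
  obtain ⟨u, hu, rfl⟩ := hφ
  exact ⟨u, hu, modalArrow_zero_of_sat_charForm hv⟩

end ModalForm

theorem stmt5 (Pp Pm : Finset ℕ) (M0 M1 : KModel) (w0 : M0.W) (x1 : M1.W)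
    (h0 : M0.Final w0) (h1 : ∀ y : M1.W, M1.R x1 y)
    (h : ModalArrow Pp Pm 2 M0 w0 M1 x1) :
    ∀ u1 : M1.W, M1.Final u1 →
      Matches Pp Pm M0 M1 (M0.cluster w0) (M1.cluster u1) := by
  intro u1 hu1
  constructor
  · intro u0 hu0
    have hw0 : M0.Sat w0 (charForm Pp Pm M0 u0).dia.box :=
      KModel.sat_box_dia_of_final h0 hu0 (sat_charForm_self M0 u0)
    have hx1 := h.sat (inFragment_charForm M0 u0).dia.box hw0
    obtain ⟨v, hv, hsat⟩ := KModel.exists_mem_cluster_of_sat_dia hu1 (hx1 u1 (h1 u1))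
    exact ⟨v, hv, modalArrow_zero_of_sat_charForm hsat⟩
  · intro v _
    have hw0 : M0.Sat w0 (charFormOfSet Pp Pm M0 (M0.cluster w0)).box :=
      KModel.sat_box_of_final h0 fun _ hy => sat_charFormOfSet hy
    have hx1 := h.sat ((inFragment_charFormOfSet M0 _).box.mono (by norm_num)) hw0
    exact exists_modalArrow_zero_of_sat_charFormOfSet (hx1 v (h1 v))
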